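/- arXiv:2605.25990 — 6 statements merged into one kernel-verified Lean document; each statement's English description precedes it below -/
import Mathlib

section
/- For every τ_A ∈ ℝ: (∫_{{A ≥ τ_A}} t dμ) / μ{A ≥ τ_A} = (α/σ_α)·H(τ_A/σ_α), (∫_{{A ≥ τ_A}} s dμ) / μ{A ≥ τ_A} = ((1−α)/σ_α)·H(τ_A/σ_α), and (∫_{{A ≥ τ_A}} Q dμ) / μ{A ≥ τ_A} = ((αβ + (1−α)(1−β))/σ_α)·H(τ_A/σ_α). -/
open MeasureTheory ProbabilityTheory Real Set Filter

/-- Standard normal pdf. -/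
noncomputable def phi (x : ℝ) : ℝ := Real.exp (-x ^ 2 / 2) / Real.sqrt (2 * Real.pi)

/-- Standard normal cdf. -/
noncomputable def Phi (x : ℝ) : ℝ := ∫ y in Set.Iic x, phi y

/-- Standard normal hazard rate. -/
noncomputable def Haz (x : ℝ) : ℝ := phi x / (1 - Phi x)

/-- Product of three standard Gaussian measures on ℝ³, coordinates (t, s, z). -/
noncomputable def mu3 : Measure (ℝ × ℝ × ℝ) :=
  (gaussianReal 0 1).prod ((gaussianReal 0 1).prod (gaussianReal 0 1))

open scoped Topology

/-!
For a linear form `X` of `(t, s, z)`, the pair `(X, A)` is jointly Gaussian under `μ`, so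
`X - (Cov(X, A) / σ_α²) • A` is uncorrelated with, hence independent of, `A`; its mean vanishes.
Therefore `E[X; A ≥ τ] = (Cov(X, A) / σ_α²) E[A; A ≥ τ]`. As `A ~ N(0, σ_α²)`,
`E[A; A ≥ τ] = σ_α φ(τ/σ_α)` (since `φ' x = -x φ x`) and `P(A ≥ τ) = 1 - Φ(τ/σ_α)`.
For `X = t, s, Q` the covariance `Cov(X, A)` is `α`, `1 - α` and `αβ + (1 - α)(1 - β)`.
-/

lemma gaussianPDFReal_zero_one : gaussianPDFReal 0 1 = phi := by
  ext x
  simp [gaussianPDFReal, phi, div_eq_inv_mul]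

lemma integrable_phi : Integrable phi :=
  gaussianPDFReal_zero_one ▸ integrable_gaussianPDFReal 0 1

lemma hasDerivAt_phi (x : ℝ) : HasDerivAt phi (-(x * phi x)) x := by
  have h : HasDerivAt (fun y : ℝ ↦ -y ^ 2 / 2) (-x) x :=
    ((hasDerivAt_pow 2 x).fun_neg.div_const 2).congr_deriv (by norm_num; ring)
  exact (h.exp.div_const (Real.sqrt (2 * π))).congr_deriv (by rw [phi]; ring)

lemma tendsto_phi_atTop : Tendsto phi atTop (𝓝 0) := by
  change Tendsto (fun x ↦ rexp (-x ^ 2 / 2) / Real.sqrt (2 * π)) atTop (𝓝 0)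
  have h : Tendsto (fun x : ℝ ↦ -x ^ 2 / 2) atTop atBot :=
    (tendsto_neg_atTop_atBot.comp
      ((tendsto_pow_atTop two_ne_zero).atTop_div_const two_pos)).congr fun x ↦ by simp [neg_div]
  simpa only [zero_div, Function.comp_def] using
    (Real.tendsto_exp_atBot.comp h).div_const (Real.sqrt (2 * π))

lemma integrable_mul_phi : Integrable fun x ↦ x * phi x := by
  refine ((integrable_mul_exp_neg_mul_sq (b := 1 / 2) (by norm_num)).div_const
    (Real.sqrt (2 * π))).congr (ae_of_all _ fun x ↦ ?_)
  simp only [phi]; ring_nf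

lemma integral_Ioi_mul_phi (u : ℝ) : ∫ x in Ioi u, x * phi x = phi u := by
  have h := integral_Ioi_of_hasDerivAt_of_tendsto (f := fun x ↦ -phi x)
    (hasDerivAt_phi u).neg.continuousAt.continuousWithinAt
    (fun x _ ↦ by simpa using (hasDerivAt_phi x).fun_neg)
    integrable_mul_phi.integrableOn (by simpa using tendsto_phi_atTop.neg)
  simpa using h

lemma integral_Ioi_phi (u : ℝ) : ∫ x in Ioi u, phi x = 1 - Phi u := by
  have h := integral_add_compl (measurableSet_Iic (a := u)) integrable_phi
  rw [compl_Iic, ← gaussianPDFReal_zero_one, integral_gaussianPDFReal_eq_one 0 one_ne_zero] at h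
  rw [Phi, ← gaussianPDFReal_zero_one]
  linarith

lemma one_sub_Phi_nonneg (u : ℝ) : 0 ≤ 1 - Phi u := by
  rw [← integral_Ioi_phi]
  exact setIntegral_nonneg measurableSet_Ioi fun x _ ↦ by rw [phi]; positivity

lemma gaussianReal_zero_one_Ici (u : ℝ) :
    gaussianReal 0 1 (Ici u) = ENNReal.ofReal (1 - Phi u) := by
  rw [gaussianReal_apply_eq_integral 0 one_ne_zero, gaussianPDFReal_zero_one,
    integral_Ici_eq_integral_Ioi, integral_Ioi_phi]

lemma setIntegral_Ici_id_gaussianReal_zero_one (u : ℝ) :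
    ∫ x in Ici u, x ∂gaussianReal 0 1 = phi u := by
  rw [gaussianReal_of_var_ne_zero 0 one_ne_zero,
    setIntegral_withDensity_eq_setIntegral_toReal_smul (measurable_gaussianPDF 0 1)
      (ae_of_all _ fun _ ↦ gaussianPDF_lt_top) _ measurableSet_Ici,
    integral_Ici_eq_integral_Ioi, ← integral_Ioi_mul_phi]
  simp [toReal_gaussianPDF, gaussianPDFReal_zero_one, mul_comm]

lemma gaussianReal_zero_sq_eq_map (σ : ℝ) :
    gaussianReal 0 (σ ^ 2).toNNReal = (gaussianReal 0 1).map (σ * ·) := by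
  rw [gaussianReal_map_const_mul, mul_zero, mul_one]
  congr
  ext; simp [sq_nonneg]

lemma gaussianReal_zero_sq_Ici {σ : ℝ} (hσ : 0 < σ) (τ : ℝ) :
    gaussianReal 0 (σ ^ 2).toNNReal (Ici τ) = ENNReal.ofReal (1 - Phi (τ / σ)) := by
  rw [gaussianReal_zero_sq_eq_map σ, Measure.map_apply (by fun_prop) measurableSet_Ici,
    Set.preimage_const_mul_Ici₀ τ hσ, gaussianReal_zero_one_Ici]

lemma setIntegral_Ici_id_gaussianReal_zero_sq {σ : ℝ} (hσ : 0 < σ) (τ : ℝ) :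
    ∫ x in Ici τ, x ∂gaussianReal 0 (σ ^ 2).toNNReal = σ * phi (τ / σ) := by
  rw [gaussianReal_zero_sq_eq_map σ,
    setIntegral_map measurableSet_Ici (by fun_prop) (by fun_prop),
    Set.preimage_const_mul_Ici₀ τ hσ, integral_const_mul,
    setIntegral_Ici_id_gaussianReal_zero_one]

namespace ProbabilityTheory

variable {Ω : Type*} {mΩ : MeasurableSpace Ω} {P : Measure Ω} {X Y : Ω → ℝ}

lemma IndepFun.setIntegral_preimage (hXY : X ⟂ᵢ[P] Y) (hX : AEMeasurable X P)
    (hY : AEMeasurable Y P) {s : Set ℝ} (hs : MeasurableSet s) :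
    ∫ ω in Y ⁻¹' s, X ω ∂P = P[X] * P.real (Y ⁻¹' s) := by
  have h_indicator (f : Ω → ℝ) :
      ∫ ω in Y ⁻¹' s, f ω ∂P = ∫ ω, f ω * s.indicator 1 (Y ω) ∂P := by
    rw [← integral_indicator₀ (hY.nullMeasurableSet_preimage hs)]
    congr with ω
    by_cases h : Y ω ∈ s <;> simp [h]
  have h_indep : X ⟂ᵢ[P] fun ω ↦ s.indicator 1 (Y ω) :=
    hXY.comp (ψ := s.indicator (1 : ℝ → ℝ)) measurable_id (measurable_one.indicator hs)
  rw [h_indicator, h_indep.integral_fun_mul_eq_mul_integral hX.aestronglyMeasurable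
    ((measurable_one.indicator hs).comp_aemeasurable hY).aestronglyMeasurable]
  congr 1
  simpa using (h_indicator fun _ ↦ 1).symm

lemma HasGaussianLaw.setIntegral_preimage (hXY : HasGaussianLaw (fun ω ↦ (X ω, Y ω)) P)
    {c : ℝ} (hc : cov[X, Y; P] = c * Var[Y; P]) {s : Set ℝ} (hs : MeasurableSet s) :
    ∫ ω in Y ⁻¹' s, X ω ∂P =
      (P[X] - c * P[Y]) * P.real (Y ⁻¹' s) + c * ∫ ω in Y ⁻¹' s, Y ω ∂P := by
  have := hXY.isProbabilityMeasure
  have hX := hXY.fst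
  have hY := hXY.snd
  have h_law : HasGaussianLaw (fun ω ↦ (X ω - c * Y ω, Y ω)) P :=
    hXY.map_fun ((ContinuousLinearMap.fst ℝ ℝ ℝ - c • ContinuousLinearMap.snd ℝ ℝ ℝ).prod
      (ContinuousLinearMap.snd ℝ ℝ ℝ))
  have h_cov : cov[fun ω ↦ X ω - c * Y ω, Y; P] = 0 := by
    rw [covariance_fun_sub_left hX.memLp_two (hY.memLp_two.const_mul c) hY.memLp_two,
      covariance_const_mul_left, covariance_self hY.aemeasurable, hc, sub_self]
  have h := (h_law.indepFun_of_covariance_eq_zero h_cov).setIntegral_preimage (by fun_prop)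
    hY.aemeasurable hs
  have hXi := hX.integrable
  have hYi := hY.integrable.const_mul c
  rw [integral_sub hXi.integrableOn hYi.integrableOn, integral_sub hXi hYi, integral_const_mul,
    integral_const_mul] at h
  linear_combination h

theorem HasGaussianLaw.setIntegral_div_measure_eq_mul_Haz
    (hXY : HasGaussianLaw (fun ω ↦ (X ω, Y ω)) P) (hX : P[X] = 0) (hY : P[Y] = 0) {σ : ℝ}
    (hσ : 0 < σ) (hvar : Var[Y; P] = σ ^ 2) (τ : ℝ) :
    (∫ ω in {ω | τ ≤ Y ω}, X ω ∂P) / (P {ω | τ ≤ Y ω}).toReal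
      = cov[X, Y; P] / σ * Haz (τ / σ) := by
  have hYm := hXY.snd.aemeasurable
  have h_law : P.map Y = gaussianReal 0 (σ ^ 2).toNNReal := by
    rw [hXY.snd.map_eq_gaussianReal, hY, hvar]
  have h_tail : P (Y ⁻¹' Ici τ) = ENNReal.ofReal (1 - Phi (τ / σ)) := by
    rw [← Measure.map_apply_of_aemeasurable hYm measurableSet_Ici, h_law,
      gaussianReal_zero_sq_Ici hσ]
  have h_tail_mean : ∫ ω in Y ⁻¹' Ici τ, Y ω ∂P = σ * phi (τ / σ) := by
    have := setIntegral_map (g := Y) (f := fun x ↦ x) (measurableSet_Ici (a := τ))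
      aestronglyMeasurable_id hYm
    rwa [h_law, setIntegral_Ici_id_gaussianReal_zero_sq hσ, eq_comm] at this
  change (∫ ω in Y ⁻¹' Ici τ, X ω ∂P) / (P (Y ⁻¹' Ici τ)).toReal = _
  rw [hXY.setIntegral_preimage (c := cov[X, Y; P] / σ ^ 2) (by rw [hvar]; field_simp)
    measurableSet_Ici, hX, hY, h_tail_mean, h_tail,
    ENNReal.toReal_ofReal (one_sub_Phi_nonneg _), Haz]
  field_simp
  ring

lemma IsGaussian.hasGaussianLaw_prodMk_strongDual {E : Type*}
    [NormedAddCommGroup E] [NormedSpace ℝ E] [MeasurableSpace E] [BorelSpace E] {μ : Measure E}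
    [IsGaussian μ] (L₁ L₂ : StrongDual ℝ E) : HasGaussianLaw (fun x ↦ (L₁ x, L₂ x)) μ :=
  IsGaussian.hasGaussianLaw_id.map_fun (L₁.prod L₂)

end ProbabilityTheory

section Prod

variable {α β : Type*} {mα : MeasurableSpace α} {mβ : MeasurableSpace β}
  {μ : Measure α} {ν : Measure β}

lemma integral_fun_fst_add_fun_snd [IsProbabilityMeasure μ] [IsProbabilityMeasure ν]
    {f : α → ℝ} {g : β → ℝ} (hf : Integrable f μ) (hg : Integrable g ν) :
    ∫ p, f p.1 + g p.2 ∂μ.prod ν = ∫ x, f x ∂μ + ∫ y, g y ∂ν := by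
  rw [integral_add (hf.comp_fst ν) (hg.comp_snd μ), integral_fun_fst, integral_fun_snd]
  simp

lemma covariance_fun_fst_fun_fst [IsProbabilityMeasure ν] {f g : α → ℝ}
    (hf : AEStronglyMeasurable f μ) (hg : AEStronglyMeasurable g μ) :
    cov[fun p ↦ f p.1, fun p ↦ g p.1; μ.prod ν] = cov[f, g; μ] := by
  rw [← covariance_map_fun (by rwa [Measure.map_fst_prod, measure_univ, one_smul])
    (by rwa [Measure.map_fst_prod, measure_univ, one_smul]) measurable_fst.aemeasurable,
    Measure.map_fst_prod, measure_univ, one_smul]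

lemma covariance_fun_snd_fun_snd [IsProbabilityMeasure μ] [SFinite ν] {f g : β → ℝ}
    (hf : AEStronglyMeasurable f ν) (hg : AEStronglyMeasurable g ν) :
    cov[fun p ↦ f p.2, fun p ↦ g p.2; μ.prod ν] = cov[f, g; ν] := by
  rw [← covariance_map_fun (by rwa [Measure.map_snd_prod, measure_univ, one_smul])
    (by rwa [Measure.map_snd_prod, measure_univ, one_smul]) measurable_snd.aemeasurable,
    Measure.map_snd_prod, measure_univ, one_smul]

lemma covariance_fun_fst_add_fun_snd [IsProbabilityMeasure μ] [IsProbabilityMeasure ν]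
    {f₁ f₂ : α → ℝ} {g₁ g₂ : β → ℝ} (hf₁ : MemLp f₁ 2 μ) (hf₂ : MemLp f₂ 2 μ)
    (hg₁ : MemLp g₁ 2 ν) (hg₂ : MemLp g₂ 2 ν) :
    cov[fun p ↦ f₁ p.1 + g₁ p.2, fun p ↦ f₂ p.1 + g₂ p.2; μ.prod ν]
      = cov[f₁, f₂; μ] + cov[g₁, g₂; ν] := by
  change cov[(fun p ↦ f₁ p.1) + (fun p ↦ g₁ p.2),
    (fun p ↦ f₂ p.1) + (fun p ↦ g₂ p.2); μ.prod ν] = _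
  rw [covariance_add_left (hf₁.comp_fst ν) (hg₁.comp_snd μ)
      ((hf₂.comp_fst ν).add (hg₂.comp_snd μ)),
    covariance_add_right (hf₁.comp_fst ν) (hf₂.comp_fst ν) (hg₂.comp_snd μ),
    covariance_add_right (hg₁.comp_snd μ) (hf₂.comp_fst ν) (hg₂.comp_snd μ),
    covariance_fst_snd_prod hf₁ hg₂, covariance_comm (X := fun p : α × β ↦ g₁ p.2),
    covariance_fst_snd_prod hf₂ hg₁,
    covariance_fun_fst_fun_fst hf₁.1 hf₂.1, covariance_fun_snd_fun_snd hg₁.1 hg₂.1]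
  ring

end Prod

lemma memLp_const_mul_id_gaussianReal (a : ℝ) : MemLp (fun x ↦ a * x) 2 (gaussianReal 0 1) :=
  (memLp_id_gaussianReal 2).const_mul a

lemma covariance_const_mul_id_gaussianReal (a b : ℝ) :
    cov[fun x ↦ a * x, fun x ↦ b * x; gaussianReal 0 1] = a * b := by
  rw [covariance_const_mul_left, covariance_const_mul_right,
    covariance_self aemeasurable_id', variance_fun_id_gaussianReal]
  simp

noncomputable def linearForm3 (a b c : ℝ) : StrongDual ℝ (ℝ × ℝ × ℝ) :=
  a • ContinuousLinearMap.fst ℝ ℝ (ℝ × ℝ) +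
    (b • ContinuousLinearMap.fst ℝ ℝ ℝ + c • ContinuousLinearMap.snd ℝ ℝ ℝ).comp
      (ContinuousLinearMap.snd ℝ ℝ (ℝ × ℝ))

lemma coe_linearForm3 (a b c : ℝ) :
    ⇑(linearForm3 a b c) = fun p ↦ a * p.1 + (b * p.2.1 + c * p.2.2) := by
  ext; simp [linearForm3]

instance : IsGaussian mu3 := by
  unfold mu3; infer_instance

lemma memLp_linear_prod_gaussianReal (b c : ℝ) :
    MemLp (fun q : ℝ × ℝ ↦ b * q.1 + c * q.2) 2 ((gaussianReal 0 1).prod (gaussianReal 0 1)) :=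
  ((memLp_const_mul_id_gaussianReal b).comp_fst _).add
    ((memLp_const_mul_id_gaussianReal c).comp_snd _)

lemma integral_linearForm3_mu3 (a b c : ℝ) : mu3[linearForm3 a b c] = 0 := by
  have h (a : ℝ) := (memLp_const_mul_id_gaussianReal a).integrable one_le_two
  rw [coe_linearForm3, mu3,
    integral_fun_fst_add_fun_snd (h a) ((memLp_linear_prod_gaussianReal b c).integrable one_le_two),
    integral_fun_fst_add_fun_snd (h b) (h c), integral_const_mul, integral_const_mul,
    integral_const_mul, integral_id_gaussianReal]
  ring

lemma covariance_linearForm3_mu3 (a b c a' b' c' : ℝ) :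
    cov[linearForm3 a b c, linearForm3 a' b' c'; mu3] = a * a' + b * b' + c * c' := by
  have h := memLp_const_mul_id_gaussianReal
  rw [coe_linearForm3, coe_linearForm3, mu3,
    covariance_fun_fst_add_fun_snd (h a) (h a') (memLp_linear_prod_gaussianReal b c)
      (memLp_linear_prod_gaussianReal b' c'),
    covariance_fun_fst_add_fun_snd (h b) (h b') (h c) (h c'),
    covariance_const_mul_id_gaussianReal, covariance_const_mul_id_gaussianReal,
    covariance_const_mul_id_gaussianReal]
  ring

theorem stmt2_general (α β σZ : ℝ)
    (A Q : ℝ × ℝ × ℝ → ℝ)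
    (hA : A = fun p => α * p.1 + (1 - α) * p.2.1 + σZ * p.2.2)
    (hQ : Q = fun p => β * p.1 + (1 - β) * p.2.1)
    (σα : ℝ) (hσα : σα = Real.sqrt (α ^ 2 + (1 - α) ^ 2 + σZ ^ 2)) :
    ∀ τA : ℝ,
      (∫ p in {p : ℝ × ℝ × ℝ | τA ≤ A p}, p.1 ∂mu3) /
          (mu3 {p : ℝ × ℝ × ℝ | τA ≤ A p}).toReal
        = α / σα * Haz (τA / σα) ∧
      (∫ p in {p : ℝ × ℝ × ℝ | τA ≤ A p}, p.2.1 ∂mu3) /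
          (mu3 {p : ℝ × ℝ × ℝ | τA ≤ A p}).toReal
        = (1 - α) / σα * Haz (τA / σα) ∧
      (∫ p in {p : ℝ × ℝ × ℝ | τA ≤ A p}, Q p ∂mu3) /
          (mu3 {p : ℝ × ℝ × ℝ | τA ≤ A p}).toReal
        = (α * β + (1 - α) * (1 - β)) / σα * Haz (τA / σα) := by
  intro τA
  have hσα_pos : 0 < σα :=
    hσα ▸ Real.sqrt_pos.2 (by nlinarith [sq_nonneg (2 * α - 1), sq_nonneg σZ])
  have hA_form : A = linearForm3 α (1 - α) σZ := by
    rw [hA, coe_linearForm3]; ext; ring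
  have hQ_form : Q = linearForm3 β (1 - β) 0 := by
    rw [hQ, coe_linearForm3]; ext; ring
  subst hA_form hQ_form
  have hvar : Var[linearForm3 α (1 - α) σZ; mu3] = σα ^ 2 := by
    rw [← covariance_self (by fun_prop), covariance_linearForm3_mu3, hσα,
      Real.sq_sqrt (by positivity)]
    ring
  have key (a b c : ℝ) := (IsGaussian.hasGaussianLaw_prodMk_strongDual (linearForm3 a b c)
    (linearForm3 α (1 - α) σZ)).setIntegral_div_measure_eq_mul_Haz
    (integral_linearForm3_mu3 a b c) (integral_linearForm3_mu3 _ _ _) hσα_pos hvar τA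
  simp only [covariance_linearForm3_mu3] at key
  refine ⟨?_, ?_, ?_⟩
  · convert key 1 0 0 using 3 <;> simp [coe_linearForm3]
  · convert key 0 1 0 using 3 <;> simp [coe_linearForm3]
  · convert key β (1 - β) 0 using 3; ring

theorem stmt2 (α β σZ : ℝ) (hα : α ∈ Set.Ioo (0 : ℝ) 1) (hβ : β ∈ Set.Ioo (0 : ℝ) 1)
    (hσZ : 0 ≤ σZ)
    (A Q : ℝ × ℝ × ℝ → ℝ)
    (hA : A = fun p => α * p.1 + (1 - α) * p.2.1 + σZ * p.2.2)
    (hQ : Q = fun p => β * p.1 + (1 - β) * p.2.1)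
    (σα : ℝ) (hσα : σα = Real.sqrt (α ^ 2 + (1 - α) ^ 2 + σZ ^ 2)) :
    ∀ τA : ℝ,
      (∫ p in {p : ℝ × ℝ × ℝ | τA ≤ A p}, p.1 ∂mu3) /
          (mu3 {p : ℝ × ℝ × ℝ | τA ≤ A p}).toReal
        = α / σα * Haz (τA / σα) ∧
      (∫ p in {p : ℝ × ℝ × ℝ | τA ≤ A p}, p.2.1 ∂mu3) /
          (mu3 {p : ℝ × ℝ × ℝ | τA ≤ A p}).toReal
        = (1 - α) / σα * Haz (τA / σα) ∧
      (∫ p in {p : ℝ × ℝ × ℝ | τA ≤ A p}, Q p ∂mu3) /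
          (mu3 {p : ℝ × ℝ × ℝ | τA ≤ A p}).toReal
        = (α * β + (1 - α) * (1 - β)) / σα * Haz (τA / σα) :=
  stmt2_general α β σZ A Q hA hQ σα hσα
end

section
/- For every τ_A ∈ ℝ, the ratio of the average type to the average soft skill of admitted students satisfies (∫_{{A ≥ τ_A}} t dμ) / (∫_{{A ≥ τ_A}} s dμ) = α/(1−α); in particular this ratio is independent of the threshold τ_A (and of any university preference parameter β). -/
/-!
Write `φ` for the standard normal density and `R = √(α² + (1-α)² + σ_Z²)`. For any weights with
`a > 0`, Fubini over the `t`-coordinate reduces `∫_{a t + b s + c z ≥ τ} t dμ` to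
`E[φ((τ - b s - c z) / a)]`, because `∫_{t ≥ x} t dN(0,1) = φ(x)` (as `φ' = -t φ`).
Integrating the Gaussian convolution identity `E[φ((x - b U) / a)] = a / √(a² + b²) · φ(x / √(a² + b²))`
twice gives `a / R · φ(τ / R)`. Swapping `t` and `s`, which preserves `μ`, gives `(1 - α) / R · φ(τ / R)`
for the integral of `s`, and the common positive factor `φ(τ / R) / R` cancels in the ratio.
-/

open MeasureTheory ProbabilityTheory Real Set Filter

lemma gaussianPDFReal_zero_one_s11 (x : ℝ) :
    gaussianPDFReal 0 1 x = (√(2 * π))⁻¹ * rexp (-x ^ 2 / 2) := by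
  simp [gaussianPDFReal]

lemma gaussianPDFReal_zero_one_le (x : ℝ) : gaussianPDFReal 0 1 x ≤ (√(2 * π))⁻¹ := by
  rw [gaussianPDFReal_zero_one_s11]
  exact mul_le_of_le_one_right (by positivity) (exp_le_one_iff.2 (by nlinarith [sq_nonneg x]))

lemma hasDerivAt_gaussianPDFReal_zero_one (x : ℝ) :
    HasDerivAt (gaussianPDFReal 0 1) (-x * gaussianPDFReal 0 1 x) x := by
  have h : HasDerivAt (fun y : ℝ ↦ -y ^ 2 / 2) (-x) x :=
    ((hasDerivAt_pow 2 x).neg.div_const 2).congr_deriv (by ring)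
  rw [funext gaussianPDFReal_zero_one_s11]
  exact (h.exp.const_mul _).congr_deriv (by ring)

lemma tendsto_gaussianPDFReal_zero_one_atTop : Tendsto (gaussianPDFReal 0 1) atTop (nhds 0) := by
  have h : Tendsto (fun x : ℝ ↦ -x ^ 2 / 2) atTop atBot :=
    (tendsto_neg_atTop_atBot.comp (tendsto_pow_atTop two_ne_zero)).atBot_div_const two_pos
  simpa [funext gaussianPDFReal_zero_one_s11] using
    (tendsto_exp_atBot.comp h).const_mul (√(2 * π))⁻¹

lemma setIntegral_Ici_id_gaussianReal (c : ℝ) :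
    ∫ x in Ici c, x ∂gaussianReal 0 1 = gaussianPDFReal 0 1 c := by
  have hint : Integrable (fun x ↦ x * gaussianPDFReal 0 1 x) := by
    simpa [gaussianPDFReal_zero_one_s11, mul_left_comm, div_eq_inv_mul] using
      (integrable_mul_exp_neg_mul_sq (b := 1 / 2) (by norm_num)).const_mul (√(2 * π))⁻¹
  have hderiv : ∀ x ∈ Ici c,
      HasDerivAt (fun y ↦ -gaussianPDFReal 0 1 y) (x * gaussianPDFReal 0 1 x) x :=
    fun x _ ↦ (hasDerivAt_gaussianPDFReal_zero_one x).neg.congr_deriv (by ring)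
  rw [← integral_indicator measurableSet_Ici, integral_gaussianReal_eq_integral_smul one_ne_zero]
  simp_rw [← indicator_smul_apply, smul_eq_mul, mul_comm (gaussianPDFReal 0 1 _)]
  rw [integral_indicator measurableSet_Ici, integral_Ici_eq_integral_Ioi,
    integral_Ioi_of_hasDerivAt_of_tendsto' hderiv hint.integrableOn
      (by simpa using tendsto_gaussianPDFReal_zero_one_atTop.neg)]
  ring

lemma integral_gaussianPDFReal_sub_mul_div {a : ℝ} (ha : 0 < a) (b x : ℝ) :
    ∫ u, gaussianPDFReal 0 1 ((x - b * u) / a) ∂gaussianReal 0 1 =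
      a / √(a ^ 2 + b ^ 2) * gaussianPDFReal 0 1 (x / √(a ^ 2 + b ^ 2)) := by
  set c := √(a ^ 2 + b ^ 2)
  have hc : 0 < c := sqrt_pos.2 (by positivity)
  have hc2 : c ^ 2 = a ^ 2 + b ^ 2 := sq_sqrt (by positivity)
  set k := c ^ 2 / (2 * a ^ 2)
  -- completing the square in `u`
  have hsq : ∀ u, gaussianPDFReal 0 1 u * gaussianPDFReal 0 1 ((x - b * u) / a) =
      (√(2 * π))⁻¹ * gaussianPDFReal 0 1 (x / c) * rexp (-k * (u - b * x / c ^ 2) ^ 2) := by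
    intro u
    simp only [gaussianPDFReal_zero_one_s11, mul_assoc, ← exp_add]
    rw [mul_left_comm _ (√(2 * π))⁻¹, ← exp_add]
    congr 3
    simp only [k]
    field_simp
    rw [hc2]
    ring
  have hk : √(π / k) = √(2 * π) * (a / c) := by
    rw [show π / k = 2 * π * (a / c) ^ 2 by simp only [k]; field_simp, sqrt_mul (by positivity),
      sqrt_sq (by positivity)]
  rw [integral_gaussianReal_eq_integral_smul one_ne_zero]
  simp_rw [smul_eq_mul, hsq]
  rw [integral_const_mul, integral_sub_right_eq_self (fun u ↦ rexp (-k * u ^ 2)),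
    integral_gaussian, hk]
  field_simp

lemma integrable_gaussianPDFReal_comp {X : Type*} [MeasurableSpace X] (μ : Measure X)
    [IsFiniteMeasure μ] {f : X → ℝ} (hf : Measurable f) :
    Integrable (fun x ↦ gaussianPDFReal 0 1 (f x)) μ := by
  refine .of_bound ((measurable_gaussianPDFReal 0 1).comp hf).aestronglyMeasurable
    (√(2 * π))⁻¹ (ae_of_all _ fun x ↦ ?_)
  rw [Real.norm_of_nonneg (gaussianPDFReal_nonneg _ _ _)]
  exact gaussianPDFReal_zero_one_le _

lemma setIntegral_fst_prod_gaussianReal {Y : Type*} [MeasurableSpace Y] (ν : Measure Y)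
    [IsFiniteMeasure ν] {a : ℝ} (ha : 0 < a) {L : Y → ℝ} (hL : Measurable L) (τ : ℝ) :
    ∫ p in {p : ℝ × Y | τ ≤ a * p.1 + L p.2}, p.1 ∂(gaussianReal 0 1).prod ν =
      ∫ y, gaussianPDFReal 0 1 ((τ - L y) / a) ∂ν := by
  have hS : MeasurableSet {p : ℝ × Y | τ ≤ a * p.1 + L p.2} :=
    measurableSet_le measurable_const (by fun_prop)
  have hint : Integrable (fun p : ℝ × Y ↦ p.1) ((gaussianReal 0 1).prod ν) :=
    ((memLp_id_gaussianReal 1).integrable le_rfl).comp_fst ν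
  rw [← integral_indicator hS, integral_prod_symm _ (hint.indicator hS)]
  congr 1 with y
  have hslice : {t : ℝ | τ ≤ a * t + L y} = Ici ((τ - L y) / a) := by
    ext t
    rw [mem_ofPred_eq, mem_Ici, div_le_iff₀ ha]
    constructor <;> intro h <;> linarith
  rw [← setIntegral_Ici_id_gaussianReal, ← hslice,
    ← integral_indicator (hslice ▸ measurableSet_Ici)]
  rfl

lemma setIntegral_fst_mu3 {a : ℝ} (ha : 0 < a) (b c τ : ℝ) :
    ∫ p in {p : ℝ × ℝ × ℝ | τ ≤ a * p.1 + b * p.2.1 + c * p.2.2}, p.1 ∂mu3 =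
      a / √(a ^ 2 + b ^ 2 + c ^ 2) * gaussianPDFReal 0 1 (τ / √(a ^ 2 + b ^ 2 + c ^ 2)) := by
  have hr : 0 < √(a ^ 2 + b ^ 2) := sqrt_pos.2 (by positivity)
  have hset : {p : ℝ × ℝ × ℝ | τ ≤ a * p.1 + b * p.2.1 + c * p.2.2} =
      {p | τ ≤ a * p.1 + (b * p.2.1 + c * p.2.2)} := by
    simp_rw [add_assoc]
  rw [hset, mu3, setIntegral_fst_prod_gaussianReal _ ha (L := fun q : ℝ × ℝ ↦ b * q.1 + c * q.2)
    (by fun_prop), integral_prod_symm _ (integrable_gaussianPDFReal_comp _ (by fun_prop))]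
  simp_rw [sub_add_eq_sub_sub_swap, integral_gaussianPDFReal_sub_mul_div ha]
  rw [integral_const_mul, integral_gaussianPDFReal_sub_mul_div hr, sq_sqrt (by positivity)]
  field_simp

lemma measurePreserving_prodLeftComm {α β γ : Type*} [MeasurableSpace α] [MeasurableSpace β]
    [MeasurableSpace γ] (μ : Measure α) (ν : Measure β) (ρ : Measure γ) [SFinite μ] [SFinite ν]
    [SFinite ρ] :
    MeasurePreserving (fun p : α × β × γ ↦ (p.2.1, p.1, p.2.2)) (μ.prod (ν.prod ρ))
      (ν.prod (μ.prod ρ)) :=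
  (measurePreserving_prodAssoc _ _ _).comp
    ((Measure.measurePreserving_swap.prod (.id _)).comp (measurePreserving_prodAssoc _ _ _).symm)

lemma setIntegral_snd_fst_mu3 {b : ℝ} (hb : 0 < b) (a c τ : ℝ) :
    ∫ p in {p : ℝ × ℝ × ℝ | τ ≤ a * p.1 + b * p.2.1 + c * p.2.2}, p.2.1 ∂mu3 =
      b / √(a ^ 2 + b ^ 2 + c ^ 2) * gaussianPDFReal 0 1 (τ / √(a ^ 2 + b ^ 2 + c ^ 2)) := by
  have hswap : MeasurePreserving (fun p : ℝ × ℝ × ℝ ↦ (p.2.1, p.1, p.2.2)) mu3 mu3 :=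
    measurePreserving_prodLeftComm _ _ _
  have hset : (fun p : ℝ × ℝ × ℝ ↦ (p.2.1, p.1, p.2.2)) ⁻¹'
      {p | τ ≤ a * p.1 + b * p.2.1 + c * p.2.2} = {p | τ ≤ b * p.1 + a * p.2.1 + c * p.2.2} := by
    ext p
    simp only [mem_preimage, mem_ofPred_eq]
    rw [add_comm (a * _)]
  rw [← hswap.map_eq, setIntegral_map (measurableSet_le measurable_const (by fun_prop))
    (by fun_prop) hswap.measurable.aemeasurable, hset, setIntegral_fst_mu3 hb, add_comm (b ^ 2)]

theorem stmt11_general (α σZ : ℝ) (hα : α ∈ Set.Ioo (0 : ℝ) 1)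
    (A : ℝ × ℝ × ℝ → ℝ)
    (hA : A = fun p => α * p.1 + (1 - α) * p.2.1 + σZ * p.2.2) :
    ∀ τA : ℝ,
      (∫ p in {p : ℝ × ℝ × ℝ | τA ≤ A p}, p.1 ∂mu3) /
        (∫ p in {p : ℝ × ℝ × ℝ | τA ≤ A p}, p.2.1 ∂mu3) = α / (1 - α) := by
  intro τA
  subst hA
  set R := √(α ^ 2 + (1 - α) ^ 2 + σZ ^ 2)
  have hφ : 0 < gaussianPDFReal 0 1 (τA / R) := gaussianPDFReal_pos _ _ _ one_ne_zero
  have hR : 0 < R := sqrt_pos.2 (by have := hα.1; positivity)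
  rw [setIntegral_fst_mu3 hα.1, setIntegral_snd_fst_mu3 (sub_pos.2 hα.2),
    mul_div_mul_right _ _ hφ.ne', div_div_div_cancel_right₀ hR.ne']

theorem stmt11 (α σZ : ℝ) (hα : α ∈ Set.Ioo (0 : ℝ) 1) (hσZ : 0 ≤ σZ)
    (A : ℝ × ℝ × ℝ → ℝ)
    (hA : A = fun p => α * p.1 + (1 - α) * p.2.1 + σZ * p.2.2) :
    ∀ τA : ℝ,
      (∫ p in {p : ℝ × ℝ × ℝ | τA ≤ A p}, p.1 ∂mu3) /
        (∫ p in {p : ℝ × ℝ × ℝ | τA ≤ A p}, p.2.1 ∂mu3) = α / (1 - α) :=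
  stmt11_general α σZ hα A hA
end

section
/- Let β₁, β₂ ∈ (0,1) with β₁ > β₂, let τ₁, τ₂ > 0, let α ∈ (0,1) and σ_Z ≥ 0, and define the admission thresholds τ_{A,i} = τ_i σ_α² / (αβ_i + (1−α)(1−β_i)) for i = 1,2, where σ_α = √(α² + (1−α)² + σ_Z²). Then: (i) if τ₁/τ₂ > β₁/β₂ then τ_{A,1} > τ_{A,2} for every α ∈ (0,1); (ii) if τ₁/τ₂ < (1−β₁)/(1−β₂) then τ_{A,1} < τ_{A,2} for every α ∈ (0,1); (iii) if (1−β₁)/(1−β₂) < τ₁/τ₂ < β₁/β₂, then with α_th = (τ₂ − τ₁ + τ₁β₂ − τ₂β₁)/(τ₂ − τ₁ + 2τ₁β₂ − 2τ₂β₁) one has τ_{A,1} > τ_{A,2} when α < α_th, τ_{A,1} < τ_{A,2} when α > α_th, and τ_{A,1} = τ_{A,2} when α = α_th. -/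
open Real Set

theorem stmt12 (β₁ β₂ τ₁ τ₂ σZ : ℝ)
    (hβ₁ : β₁ ∈ Set.Ioo (0 : ℝ) 1) (hβ₂ : β₂ ∈ Set.Ioo (0 : ℝ) 1) (hββ : β₂ < β₁)
    (hτ₁ : 0 < τ₁) (hτ₂ : 0 < τ₂) (hσZ : 0 ≤ σZ)
    (τA₁ τA₂ : ℝ → ℝ)
    (h1 : ∀ α, τA₁ α = τ₁ * (Real.sqrt (α ^ 2 + (1 - α) ^ 2 + σZ ^ 2)) ^ 2 /
        (α * β₁ + (1 - α) * (1 - β₁)))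
    (h2 : ∀ α, τA₂ α = τ₂ * (Real.sqrt (α ^ 2 + (1 - α) ^ 2 + σZ ^ 2)) ^ 2 /
        (α * β₂ + (1 - α) * (1 - β₂)))
    (αth : ℝ)
    (hαth : αth = (τ₂ - τ₁ + τ₁ * β₂ - τ₂ * β₁) / (τ₂ - τ₁ + 2 * τ₁ * β₂ - 2 * τ₂ * β₁)) :
    (τ₁ / τ₂ > β₁ / β₂ → ∀ α ∈ Set.Ioo (0 : ℝ) 1, τA₁ α > τA₂ α) ∧
    (τ₁ / τ₂ < (1 - β₁) / (1 - β₂) → ∀ α ∈ Set.Ioo (0 : ℝ) 1, τA₁ α < τA₂ α) ∧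
    ((1 - β₁) / (1 - β₂) < τ₁ / τ₂ ∧ τ₁ / τ₂ < β₁ / β₂ →
      ∀ α ∈ Set.Ioo (0 : ℝ) 1,
        (α < αth → τA₁ α > τA₂ α) ∧
        (αth < α → τA₁ α < τA₂ α) ∧
        (α = αth → τA₁ α = τA₂ α)) := by
  obtain ⟨hb1, hb1'⟩ := hβ₁
  obtain ⟨hb2, hb2'⟩ := hβ₂
  have main : ∀ α ∈ Set.Ioo (0:ℝ) 1,
      (τ₁ * (α * β₂ + (1 - α) * (1 - β₂)) < τ₂ * (α * β₁ + (1 - α) * (1 - β₁)) →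
        τA₁ α < τA₂ α) ∧
      (τ₂ * (α * β₁ + (1 - α) * (1 - β₁)) < τ₁ * (α * β₂ + (1 - α) * (1 - β₂)) →
        τA₂ α < τA₁ α) ∧
      (τ₁ * (α * β₂ + (1 - α) * (1 - β₂)) = τ₂ * (α * β₁ + (1 - α) * (1 - β₁)) →
        τA₁ α = τA₂ α) := by
    rintro α ⟨ha, ha'⟩
    have hS : 0 < α ^ 2 + (1 - α) ^ 2 + σZ ^ 2 := by
      nlinarith [mul_pos ha ha, sq_nonneg (1 - α), sq_nonneg σZ]
    have hsq : (Real.sqrt (α ^ 2 + (1 - α) ^ 2 + σZ ^ 2)) ^ 2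
        = α ^ 2 + (1 - α) ^ 2 + σZ ^ 2 := Real.sq_sqrt hS.le
    have hD₁ : 0 < α * β₁ + (1 - α) * (1 - β₁) := by nlinarith
    have hD₂ : 0 < α * β₂ + (1 - α) * (1 - β₂) := by nlinarith
    rw [h1, h2, hsq]
    refine ⟨?_, ?_, ?_⟩
    · intro h
      rw [div_lt_div_iff₀ hD₁ hD₂]
      nlinarith [mul_pos (sub_pos.2 h) hS]
    · intro h
      rw [div_lt_div_iff₀ hD₂ hD₁]
      nlinarith [mul_pos (sub_pos.2 h) hS]
    · intro h
      rw [div_eq_div_iff hD₁.ne' hD₂.ne']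
      linear_combination (α ^ 2 + (1 - α) ^ 2 + σZ ^ 2) * h
  refine ⟨?_, ?_, ?_⟩
  · intro h α hα
    have hA : β₁ * τ₂ < τ₁ * β₂ := (div_lt_div_iff₀ hb2 hτ₂).mp h
    have hττ : τ₂ < τ₁ := by nlinarith
    have hB : τ₂ * (1 - β₁) < τ₁ * (1 - β₂) := by nlinarith
    obtain ⟨ha, ha'⟩ := hα
    have p1 : 0 < α * (τ₁ * β₂ - τ₂ * β₁) :=
      mul_pos ha (show (0:ℝ) < τ₁ * β₂ - τ₂ * β₁ by nlinarith)
    have p2 : 0 < (1 - α) * (τ₁ * (1 - β₂) - τ₂ * (1 - β₁)) :=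
      mul_pos (by linarith) (by linarith)
    exact (main α ⟨ha, ha'⟩).2.1 (by nlinarith [p1, p2])
  · intro h α hα
    have hA : τ₁ * (1 - β₂) < (1 - β₁) * τ₂ :=
      (div_lt_div_iff₀ hτ₂ (show (0:ℝ) < 1 - β₂ by linarith)).mp h
    have hττ : τ₁ < τ₂ := by nlinarith
    have hB : τ₁ * β₂ < τ₂ * β₁ := by nlinarith
    obtain ⟨ha, ha'⟩ := hα
    have p1 : 0 < α * (τ₂ * β₁ - τ₁ * β₂) := mul_pos ha (by linarith)
    have p2 : 0 < (1 - α) * (τ₂ * (1 - β₁) - τ₁ * (1 - β₂)) :=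
      mul_pos (by linarith) (by nlinarith)
    exact (main α ⟨ha, ha'⟩).1 (by nlinarith [p1, p2])
  · rintro ⟨hL, hR⟩ α hα
    have hA : τ₁ * β₂ < β₁ * τ₂ := (div_lt_div_iff₀ hτ₂ hb2).mp hR
    have hB : (1 - β₁) * τ₂ < τ₁ * (1 - β₂) :=
      (div_lt_div_iff₀ (show (0:ℝ) < 1 - β₂ by linarith) hτ₂).mp hL
    have hd : τ₂ - τ₁ + 2 * τ₁ * β₂ - 2 * τ₂ * β₁ < 0 := by nlinarith
    have hkey : αth * (τ₂ - τ₁ + 2 * τ₁ * β₂ - 2 * τ₂ * β₁)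
        = τ₂ - τ₁ + τ₁ * β₂ - τ₂ * β₁ := by
      rw [hαth, div_mul_cancel₀ _ hd.ne]
    obtain ⟨ha, ha'⟩ := hα
    refine ⟨?_, ?_, ?_⟩
    · intro hlt
      have h5 : τ₂ - τ₁ + τ₁ * β₂ - τ₂ * β₁
          < α * (τ₂ - τ₁ + 2 * τ₁ * β₂ - 2 * τ₂ * β₁) := by
        rw [← hkey]
        exact (mul_lt_mul_right_of_neg hd).mpr hlt
      exact (main α ⟨ha, ha'⟩).2.1 (by ring_nf at h5 ⊢; linarith)
    · intro hlt
      have h5 : α * (τ₂ - τ₁ + 2 * τ₁ * β₂ - 2 * τ₂ * β₁)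
          < τ₂ - τ₁ + τ₁ * β₂ - τ₂ * β₁ := by
        rw [← hkey]
        exact (mul_lt_mul_right_of_neg hd).mpr hlt
      exact (main α ⟨ha, ha'⟩).1 (by ring_nf at h5 ⊢; linarith)
    · intro heq
      have h5 : α * (τ₂ - τ₁ + 2 * τ₁ * β₂ - 2 * τ₂ * β₁)
          = τ₂ - τ₁ + τ₁ * β₂ - τ₂ * β₁ := by rw [heq, hkey]
      exact (main α ⟨ha, ha'⟩).2.2 (by linear_combination h5)
end

section
/- Let τ₂ < τ₁ be real thresholds and q ∈ (0,1]. Define the attendee mean type at the less selective university as M_t = (∫_{{τ₂ ≤ A < τ₁}} t dμ + (1−q)·∫_{{A ≥ τ₁}} t dμ) / (μ{τ₂ ≤ A < τ₁} + (1−q)·μ{A ≥ τ₁}), and analogously M_s with s in place of t. Then M_t < (∫_{{A ≥ τ₂}} t dμ)/μ{A ≥ τ₂} and M_s < (∫_{{A ≥ τ₂}} s dμ)/μ{A ≥ τ₂}; that is, the less selective university's attendees have strictly lower average type and strictly lower average soft skill than the set of all students it admits. -/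
/-!
Let `X` be a coordinate (`t` or `s`) and `A` the score. As `(X, A)` is a centred Gaussian pair,
the residual `X - c A`, with `c = Cov(X, A) / Var(A) > 0`, is uncorrelated with `A`, hence
independent of it, and centred; so `∫_{A ∈ S} X = c ∫_{A ∈ S} A` for every Borel set `S`. Both
claims thus reduce to the same claim for `A` itself, which is elementary: compared with all admitted
students, the attendees under-weight `{A ≥ τ₁}` against `{τ₂ ≤ A < τ₁}`, and `A` is larger on the
first set than on the second (`A ≥ τ₁ > A`, strictly on a set of positive measure).
-/

open MeasureTheory ProbabilityTheory Real Set Filter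

open scoped NNReal

lemma mixture_div_lt {n₁ n₂ P₁ P₂ q t : ℝ} (hq0 : 0 < q) (hq1 : q ≤ 1) (hP₁ : 0 < P₁)
    (hP₂ : 0 < P₂) (h₁ : n₁ ≤ t * P₁) (h₂ : t * P₂ < n₂) :
    (n₁ + (1 - q) * n₂) / (P₁ + (1 - q) * P₂) < (n₁ + n₂) / (P₁ + P₂) := by
  have hcross : n₁ * P₂ < n₂ * P₁ := by nlinarith
  rw [div_lt_div_iff₀ (by nlinarith) (by linarith)]
  nlinarith [mul_pos hq0 (sub_pos.mpr hcross)]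

section General

variable {Ω : Type*} {mΩ : MeasurableSpace Ω} {P : Measure Ω}

lemma setIntegral_preimage_eq_of_hasGaussianLaw {X Y : Ω → ℝ}
    (hXY : HasGaussianLaw (fun ω ↦ (X ω, Y ω)) P) (hY : Measurable Y) {c : ℝ}
    (hc : cov[X, Y; P] = c * Var[Y; P]) {S : Set ℝ} (hS : MeasurableSet S) :
    ∫ ω in Y ⁻¹' S, X ω ∂P
      = (P[X] - c * P[Y]) * P.real (Y ⁻¹' S) + c * ∫ ω in Y ⁻¹' S, Y ω ∂P := by
  have := hXY.isProbabilityMeasure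
  have hX2 := hXY.fst.memLp_two
  have hY2 := hXY.snd.memLp_two
  have hX1 := hXY.fst.integrable
  have hY1 := hXY.snd.integrable
  let L : ℝ × ℝ →L[ℝ] ℝ × ℝ :=
    (ContinuousLinearMap.fst ℝ ℝ ℝ - c • ContinuousLinearMap.snd ℝ ℝ ℝ).prod
      (ContinuousLinearMap.snd ℝ ℝ ℝ)
  have hWY : HasGaussianLaw (fun ω ↦ (X ω - c * Y ω, Y ω)) P := by
    simpa [L] using hXY.map_fun L
  have hindep : IndepFun (fun ω ↦ X ω - c * Y ω) Y P :=
    hWY.indepFun_of_covariance_eq_zero <| by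
      rw [covariance_fun_sub_left hX2 (hY2.const_mul c) hY2, covariance_const_mul_left,
        covariance_self hY.aemeasurable, hc, sub_self]
  have hW : ∫ ω in Y ⁻¹' S, (X ω - c * Y ω) ∂P = P.real (Y ⁻¹' S) * (P[X] - c * P[Y]) := by
    refine (Indep.setIntegral_eq_mul (f := id) hY.comap_le
      ((IndepFun_iff_Indep _ _ _).mp hindep.symm) hWY.fst.aemeasurable ⟨S, hS, rfl⟩
      aestronglyMeasurable_id).trans ?_
    simp only [id_eq, integral_sub hX1 (hY1.const_mul c), integral_const_mul]
  rw [integral_sub hX1.integrableOn (hY1.const_mul c).integrableOn, integral_const_mul] at hW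
  linarith

lemma mul_measureReal_lt_setIntegral_Ici [IsFiniteMeasure P] {Y : Ω → ℝ} (hY : Measurable Y)
    (hYi : Integrable Y P) {t : ℝ} (h : 0 < P.real (Y ⁻¹' Ioi t)) :
    t * P.real (Y ⁻¹' Ici t) < ∫ ω in Y ⁻¹' Ici t, Y ω ∂P := by
  have hs : MeasurableSet (Y ⁻¹' Ici t) := hY measurableSet_Ici
  have hpos : 0 < ∫ ω in Y ⁻¹' Ici t, (Y ω - t) ∂P := by
    rw [setIntegral_pos_iff_support_of_nonneg_ae
      ((ae_restrict_iff' hs).mpr (ae_of_all _ fun ω hω ↦ sub_nonneg.mpr hω))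
      (hYi.integrableOn.sub (integrableOn_const (measure_ne_top _ _)))]
    refine (ENNReal.toReal_pos_iff.mp h).1.trans_le (measure_mono fun ω hω ↦ ?_)
    exact ⟨sub_ne_zero.mpr (mem_Ioi.mp hω).ne', preimage_mono Ioi_subset_Ici_self hω⟩
  rw [integral_sub hYi.integrableOn (integrableOn_const (measure_ne_top _ _)),
    setIntegral_const, smul_eq_mul] at hpos
  linarith

lemma mixture_setIntegral_div_lt [IsFiniteMeasure P] {X Y : Ω → ℝ} (hY : Measurable Y)
    (hYi : Integrable Y P) {c : ℝ} (hc : 0 < c) (hXY : ∀ S : Set ℝ, MeasurableSet S →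
      ∫ ω in Y ⁻¹' S, X ω ∂P = c * ∫ ω in Y ⁻¹' S, Y ω ∂P)
    {τ₁ τ₂ q : ℝ} (hτ : τ₂ ≤ τ₁) (hq0 : 0 < q) (hq1 : q ≤ 1)
    (h₁ : 0 < P.real (Y ⁻¹' Ico τ₂ τ₁)) (h₂ : 0 < P.real (Y ⁻¹' Ioi τ₁)) :
    ((∫ ω in Y ⁻¹' Ico τ₂ τ₁, X ω ∂P) + (1 - q) * ∫ ω in Y ⁻¹' Ici τ₁, X ω ∂P)
        / (P.real (Y ⁻¹' Ico τ₂ τ₁) + (1 - q) * P.real (Y ⁻¹' Ici τ₁))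
      < (∫ ω in Y ⁻¹' Ici τ₂, X ω ∂P) / P.real (Y ⁻¹' Ici τ₂) := by
  have hsplit : Y ⁻¹' Ici τ₂ = Y ⁻¹' Ico τ₂ τ₁ ∪ Y ⁻¹' Ici τ₁ := by
    rw [← preimage_union, Ico_union_Ici_eq_Ici hτ]
  have hdisj : Disjoint (Y ⁻¹' Ico τ₂ τ₁) (Y ⁻¹' Ici τ₁) :=
    ((Iio_disjoint_Ici le_rfl).mono_left Ico_subset_Iio_self).preimage Y
  have hmeas : MeasurableSet (Y ⁻¹' Ici τ₁) := hY measurableSet_Ici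
  have hn₁ : ∫ ω in Y ⁻¹' Ico τ₂ τ₁, Y ω ∂P ≤ τ₁ * P.real (Y ⁻¹' Ico τ₂ τ₁) := by
    rw [mul_comm, ← smul_eq_mul, ← setIntegral_const]
    exact setIntegral_mono_on hYi.integrableOn (integrableOn_const (measure_ne_top _ _))
      (hY measurableSet_Ico) fun ω hω ↦ hω.2.le
  have hn₂ := mul_measureReal_lt_setIntegral_Ici hY hYi h₂
  have hP₂ : 0 < P.real (Y ⁻¹' Ici τ₁) :=
    h₂.trans_le (measureReal_mono (preimage_mono Ioi_subset_Ici_self))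
  rw [hXY _ measurableSet_Ico, hXY _ measurableSet_Ici, hXY _ measurableSet_Ici, hsplit,
    measureReal_union hdisj hmeas,
    setIntegral_union hdisj hmeas hYi.integrableOn hYi.integrableOn]
  refine lt_of_eq_of_lt ?_ ((mul_lt_mul_of_pos_left
    (mixture_div_lt hq0 hq1 h₁ hP₂ hn₁ hn₂) hc).trans_eq ?_) <;> ring

end General

lemma map_prod_fun_add_eq_gaussianReal {α β : Type*} {mα : MeasurableSpace α}
    {mβ : MeasurableSpace β} {μ : Measure α} {ν : Measure β} [IsProbabilityMeasure μ]
    [IsProbabilityMeasure ν] {X : α → ℝ} {Y : β → ℝ} (hX : Measurable X) (hY : Measurable Y)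
    {m₁ m₂ : ℝ} {v₁ v₂ : ℝ≥0} (hμ : μ.map X = gaussianReal m₁ v₁)
    (hν : ν.map Y = gaussianReal m₂ v₂) :
    (μ.prod ν).map (fun p ↦ X p.1 + Y p.2) = gaussianReal (m₁ + m₂) (v₁ + v₂) := by
  refine gaussianReal_add_gaussianReal_of_indepFun (indepFun_prod hX hY) ?_ ?_
  · rw [← hμ, ← Function.comp_def, ← Measure.map_map hX measurable_fst, Measure.map_fst_prod,
      measure_univ, one_smul]
  · rw [← hν, ← Function.comp_def, ← Measure.map_map hY measurable_snd, Measure.map_snd_prod,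
      measure_univ, one_smul]

instance isGaussian_mu3 : IsGaussian mu3 := by
  unfold mu3
  infer_instance

def linForm (a b c : ℝ) : StrongDual ℝ (ℝ × ℝ × ℝ) :=
  a • ContinuousLinearMap.fst ℝ ℝ (ℝ × ℝ)
    + b • (ContinuousLinearMap.fst ℝ ℝ ℝ).comp (ContinuousLinearMap.snd ℝ ℝ (ℝ × ℝ))
    + c • (ContinuousLinearMap.snd ℝ ℝ ℝ).comp (ContinuousLinearMap.snd ℝ ℝ (ℝ × ℝ))

@[simp]
lemma linForm_apply (a b c : ℝ) (p : ℝ × ℝ × ℝ) :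
    linForm a b c p = a * p.1 + b * p.2.1 + c * p.2.2 := by
  simp [linForm]

lemma linForm_add (a b c a' b' c' : ℝ) :
    linForm a b c + linForm a' b' c' = linForm (a + a') (b + b') (c + c') := by
  refine ContinuousLinearMap.ext fun p ↦ ?_
  simp only [FunLike.coe_add, Pi.add_apply, linForm_apply]
  ring

lemma map_linForm_mu3 (a b c : ℝ) :
    mu3.map (linForm a b c) = gaussianReal 0 (a ^ 2 + b ^ 2 + c ^ 2).toNNReal := by
  have hγ : ∀ r : ℝ, (gaussianReal 0 1).map (r * ·) = gaussianReal 0 ⟨r ^ 2, sq_nonneg r⟩ := by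
    intro r
    rw [gaussianReal_map_const_mul, mul_zero, mul_one]
    rfl
  have hsplit : ⇑(linForm a b c) = fun p ↦ a * p.1 + (b * p.2.1 + c * p.2.2) := by
    ext p
    simp only [linForm_apply]
    ring
  rw [hsplit, mu3, map_prod_fun_add_eq_gaussianReal (measurable_const_mul a)
    (by fun_prop : Measurable fun q : ℝ × ℝ ↦ b * q.1 + c * q.2) (hγ a)
    (map_prod_fun_add_eq_gaussianReal (measurable_const_mul b) (measurable_const_mul c)
      (hγ b) (hγ c))]
  congr 1
  · simp
  · ext
    rw [Real.coe_toNNReal _ (by positivity), add_assoc]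
    rfl

lemma integral_linForm_mu3 (a b c : ℝ) : ∫ p, linForm a b c p ∂mu3 = 0 := by
  have h := integral_map (μ := mu3) (linForm a b c).measurable.aemeasurable
    (f := fun x : ℝ ↦ x) aestronglyMeasurable_id
  rwa [map_linForm_mu3, integral_id_gaussianReal, eq_comm] at h

lemma variance_linForm_mu3 (a b c : ℝ) : Var[linForm a b c; mu3] = a ^ 2 + b ^ 2 + c ^ 2 := by
  rw [← variance_id_map (linForm a b c).measurable.aemeasurable, map_linForm_mu3,
    variance_id_gaussianReal, Real.coe_toNNReal _ (by positivity)]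

lemma covariance_linForm_mu3 (a b c a' b' c' : ℝ) :
    cov[linForm a b c, linForm a' b' c'; mu3] = a * a' + b * b' + c * c' := by
  have hL : ∀ a b c, MemLp (linForm a b c) 2 mu3 := fun a b c ↦
    (IsGaussian.hasGaussianLaw_id.map_fun (linForm a b c)).memLp_two
  have := variance_add (hL a b c) (hL a' b' c')
  rw [← FunLike.coe_add, linForm_add, variance_linForm_mu3, variance_linForm_mu3,
    variance_linForm_mu3] at this
  linarith

lemma measureReal_linForm_preimage_pos {a b c : ℝ} (habc : a ^ 2 + b ^ 2 + c ^ 2 ≠ 0)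
    {S : Set ℝ} (hS : MeasurableSet S) (hvol : volume S ≠ 0) :
    0 < mu3.real (linForm a b c ⁻¹' S) := by
  rw [← map_measureReal_apply (linForm a b c).measurable hS, map_linForm_mu3]
  refine ENNReal.toReal_pos (fun h ↦ hvol ?_) (measure_ne_top _ _)
  exact gaussianReal_absolutelyContinuous' 0 (by positivity) h

lemma setIntegral_linForm_preimage (a b c a' b' c' : ℝ) {S : Set ℝ} (hS : MeasurableSet S) :
    ∫ p in linForm a b c ⁻¹' S, linForm a' b' c' p ∂mu3
      = (a * a' + b * b' + c * c') / (a ^ 2 + b ^ 2 + c ^ 2)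
        * ∫ p in linForm a b c ⁻¹' S, linForm a b c p ∂mu3 := by
  have hpair : HasGaussianLaw (fun p ↦ (linForm a' b' c' p, linForm a b c p)) mu3 :=
    IsGaussian.hasGaussianLaw_id.map_fun ((linForm a' b' c').prod (linForm a b c))
  have hcov : cov[linForm a' b' c', linForm a b c; mu3]
      = (a * a' + b * b' + c * c') / (a ^ 2 + b ^ 2 + c ^ 2) * Var[linForm a b c; mu3] := by
    rw [covariance_linForm_mu3, variance_linForm_mu3]
    rcases eq_or_ne (a ^ 2 + b ^ 2 + c ^ 2) 0 with h | h
    · obtain ⟨rfl, rfl, rfl⟩ : a = 0 ∧ b = 0 ∧ c = 0 := by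
        refine ⟨?_, ?_, ?_⟩ <;> nlinarith [sq_nonneg a, sq_nonneg b, sq_nonneg c]
      simp
    · field_simp
  rw [setIntegral_preimage_eq_of_hasGaussianLaw hpair (linForm a b c).measurable hcov hS,
    integral_linForm_mu3, integral_linForm_mu3]
  ring

theorem stmt13_general (α σZ : ℝ) (hα : α ∈ Set.Ioo (0 : ℝ) 1)
    (A : ℝ × ℝ × ℝ → ℝ)
    (hA : A = fun p => α * p.1 + (1 - α) * p.2.1 + σZ * p.2.2)
    (τ₁ τ₂ q : ℝ) (hτ : τ₂ < τ₁) (hq : q ∈ Set.Ioc (0 : ℝ) 1)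
    (Mt Ms D : ℝ)
    (hD : D = (mu3 {p : ℝ × ℝ × ℝ | τ₂ ≤ A p ∧ A p < τ₁}).toReal
        + (1 - q) * (mu3 {p : ℝ × ℝ × ℝ | τ₁ ≤ A p}).toReal)
    (hMt : Mt = ((∫ p in {p : ℝ × ℝ × ℝ | τ₂ ≤ A p ∧ A p < τ₁}, p.1 ∂mu3)
        + (1 - q) * ∫ p in {p : ℝ × ℝ × ℝ | τ₁ ≤ A p}, p.1 ∂mu3) / D)
    (hMs : Ms = ((∫ p in {p : ℝ × ℝ × ℝ | τ₂ ≤ A p ∧ A p < τ₁}, p.2.1 ∂mu3)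
        + (1 - q) * ∫ p in {p : ℝ × ℝ × ℝ | τ₁ ≤ A p}, p.2.1 ∂mu3) / D) :
    Mt < (∫ p in {p : ℝ × ℝ × ℝ | τ₂ ≤ A p}, p.1 ∂mu3) /
        (mu3 {p : ℝ × ℝ × ℝ | τ₂ ≤ A p}).toReal ∧
    Ms < (∫ p in {p : ℝ × ℝ × ℝ | τ₂ ≤ A p}, p.2.1 ∂mu3) /
        (mu3 {p : ℝ × ℝ × ℝ | τ₂ ≤ A p}).toReal := by
  obtain ⟨hα0, hα1⟩ := hα
  obtain ⟨hq0, hq1⟩ := hq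
  have hAform : A = linForm α (1 - α) σZ := by
    rw [hA]
    ext p
    simp
  subst hAform hD hMt hMs
  have hv : α ^ 2 + (1 - α) ^ 2 + σZ ^ 2 ≠ 0 := by positivity
  have h₁ := measureReal_linForm_preimage_pos hv (S := Ico τ₂ τ₁) measurableSet_Ico (by simp [hτ])
  have h₂ := measureReal_linForm_preimage_pos hv (S := Ioi τ₁) measurableSet_Ioi (by simp)
  have hAi : Integrable (linForm α (1 - α) σZ) mu3 :=
    (IsGaussian.hasGaussianLaw_id.map_fun (linForm α (1 - α) σZ)).integrable
  have key : ∀ a' b' c', 0 < α * a' + (1 - α) * b' + σZ * c' → _ := fun a' b' c' hc ↦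
    mixture_setIntegral_div_lt (X := linForm a' b' c') (linForm α (1 - α) σZ).measurable hAi
      (div_pos hc (by positivity)) (fun S hS ↦ setIntegral_linForm_preimage _ _ _ _ _ _ hS)
      hτ.le hq0 hq1 h₁ h₂
  have hT : (fun p : ℝ × ℝ × ℝ ↦ p.1) = linForm 1 0 0 := by ext; simp
  have hS : (fun p : ℝ × ℝ × ℝ ↦ p.2.1) = linForm 0 1 0 := by ext; simp
  rw [hT, hS]
  exact ⟨key 1 0 0 (by linarith), key 0 1 0 (by linarith)⟩

theorem stmt13 (α σZ : ℝ) (hα : α ∈ Set.Ioo (0 : ℝ) 1) (hσZ : 0 ≤ σZ)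
    (A : ℝ × ℝ × ℝ → ℝ)
    (hA : A = fun p => α * p.1 + (1 - α) * p.2.1 + σZ * p.2.2)
    (τ₁ τ₂ q : ℝ) (hτ : τ₂ < τ₁) (hq : q ∈ Set.Ioc (0 : ℝ) 1)
    (Mt Ms D : ℝ)
    (hD : D = (mu3 {p : ℝ × ℝ × ℝ | τ₂ ≤ A p ∧ A p < τ₁}).toReal
        + (1 - q) * (mu3 {p : ℝ × ℝ × ℝ | τ₁ ≤ A p}).toReal)
    (hMt : Mt = ((∫ p in {p : ℝ × ℝ × ℝ | τ₂ ≤ A p ∧ A p < τ₁}, p.1 ∂mu3)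
        + (1 - q) * ∫ p in {p : ℝ × ℝ × ℝ | τ₁ ≤ A p}, p.1 ∂mu3) / D)
    (hMs : Ms = ((∫ p in {p : ℝ × ℝ × ℝ | τ₂ ≤ A p ∧ A p < τ₁}, p.2.1 ∂mu3)
        + (1 - q) * ∫ p in {p : ℝ × ℝ × ℝ | τ₁ ≤ A p}, p.2.1 ∂mu3) / D) :
    Mt < (∫ p in {p : ℝ × ℝ × ℝ | τ₂ ≤ A p}, p.1 ∂mu3) /
        (mu3 {p : ℝ × ℝ × ℝ | τ₂ ≤ A p}).toReal ∧
    Ms < (∫ p in {p : ℝ × ℝ × ℝ | τ₂ ≤ A p}, p.2.1 ∂mu3) /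
        (mu3 {p : ℝ × ℝ × ℝ | τ₂ ≤ A p}).toReal :=
  stmt13_general α σZ hα A hA τ₁ τ₂ q hτ hq Mt Ms D hD hMt hMs
end

section
/- Let τ₂ < τ₁ be real thresholds and q ∈ (0,1]. Define M_t = (∫_{{τ₂ ≤ A < τ₁}} t dμ + (1−q)·∫_{{A ≥ τ₁}} t dμ) / (μ{τ₂ ≤ A < τ₁} + (1−q)·μ{A ≥ τ₁}), and analogously M_s with s in place of t. Then (∫_{{A ≥ τ₁}} t dμ)/μ{A ≥ τ₁} > M_t and (∫_{{A ≥ τ₁}} s dμ)/μ{A ≥ τ₁} > M_s; that is, the more selective university's attendees have strictly higher average type and strictly higher average soft skill than the less selective university's attendees. -/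
/-!
Since `(t, A)` is a Gaussian pair, `t - k A` is independent of `A` for the regression coefficient
`k = Cov(t, A) / Var(A) > 0`. Hence `∫_{A ∈ B} t = c μ{A ∈ B} + k ∫_{A ∈ B} A` with `c`, `k` not
depending on `B`, so comparing averages of `t` over events defined by `A` reduces to comparing
averages of `A`. On the band `τ₂ ≤ A < τ₁`, which has positive mass, the average of `A` is below
`τ₁`, and on `A ≥ τ₁` it is at least `τ₁`; the less selective university's population mixes the
band with the upper event, so its average is strictly below the upper one. For `s` the same
argument runs with `Cov(s, A) = 1 - α`.
-/

open MeasureTheory ProbabilityTheory Real Set Filter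

open scoped ENNReal NNReal

namespace MeasureTheory

variable {α : Type*} {mα : MeasurableSpace α} {μ : Measure α}

theorem setIntegral_lt_of_lt_const {f : α → ℝ} {s : Set α} {c : ℝ} (hs : NullMeasurableSet s μ)
    (hμs : μ.real s ≠ 0) (hf : IntegrableOn f s μ) (hlt : ∀ x ∈ s, f x < c) :
    ∫ x in s, f x ∂μ < c * μ.real s := by
  have hs_fin : μ s ≠ ∞ := fun h ↦ hμs (by simp [Measure.real, h])
  have hc := integrableOn_const (C := c) hs_fin
  have hpos : 0 < ∫ x in s, (c - f x) ∂μ := by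
    rw [setIntegral_pos_iff_support_of_nonneg_ae (f := fun x ↦ c - f x) ?_ (hc.sub hf),
      inter_eq_right.2 fun x hx ↦ Function.mem_support.2 (sub_ne_zero.2 (hlt x hx).ne')]
    · exact pos_iff_ne_zero.2 fun h ↦ hμs (by simp [Measure.real, h])
    · filter_upwards [ae_restrict_mem₀ hs] with x hx using sub_nonneg.2 (hlt x hx).le
  rw [integral_sub hc hf, setIntegral_const, smul_eq_mul] at hpos
  linarith

end MeasureTheory

namespace ProbabilityTheory

section Prod

variable {Ω Ω' : Type*} {mΩ : MeasurableSpace Ω} {mΩ' : MeasurableSpace Ω'}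
  {μ : Measure Ω} {ν : Measure Ω'} [IsProbabilityMeasure μ] [IsProbabilityMeasure ν]

lemma covariance_add_prod {X X' : Ω → ℝ} {Y Y' : Ω' → ℝ} (hX : MemLp X 2 μ) (hX' : MemLp X' 2 μ)
    (hY : MemLp Y 2 ν) (hY' : MemLp Y' 2 ν) :
    cov[fun p ↦ X p.1 + Y p.2, fun p ↦ X' p.1 + Y' p.2; μ.prod ν]
      = cov[X, X'; μ] + cov[Y, Y'; ν] := by
  change cov[(fun p ↦ X p.1) + (fun p ↦ Y p.2), (fun p ↦ X' p.1) + (fun p ↦ Y' p.2); μ.prod ν] = _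
  have hX₁ := hX.comp_fst ν
  have hY₂ := hY.comp_snd μ
  have hX'₁ := hX'.comp_fst ν
  have hY'₂ := hY'.comp_snd μ
  rw [covariance_add_left hX₁ hY₂ (hX'₁.add hY'₂), covariance_add_right hX₁ hX'₁ hY'₂,
    covariance_add_right hY₂ hX'₁ hY'₂, covariance_fst_snd_prod hX hY',
    covariance_comm (fun p : Ω × Ω' ↦ Y p.2), covariance_fst_snd_prod hX' hY,
    measurePreserving_fst.hasLaw.covariance_fun_comp hX.aemeasurable hX'.aemeasurable,
    measurePreserving_snd.hasLaw.covariance_fun_comp hY.aemeasurable hY'.aemeasurable]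
  ring

end Prod

lemma covariance_const_mul_gaussianReal (m : ℝ) (v : ℝ≥0) (a a' : ℝ) :
    cov[fun x ↦ a * x, fun x ↦ a' * x; gaussianReal m v] = a * a' * v := by
  rw [covariance_const_mul_left, covariance_const_mul_right,
    covariance_self aemeasurable_id', ← Function.id_def, variance_id_gaussianReal]
  ring

lemma IsGaussian.hasGaussianLaw_of_isLinearMap {E F : Type*}
    [NormedAddCommGroup E] [NormedSpace ℝ E] [FiniteDimensional ℝ E] [MeasurableSpace E]
    [BorelSpace E] [NormedAddCommGroup F] [NormedSpace ℝ F]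
    [MeasurableSpace F] [BorelSpace F] {μ : Measure E} [IsGaussian μ] {f : E → F}
    (hf : IsLinearMap ℝ f) : HasGaussianLaw f μ :=
  IsGaussian.hasGaussianLaw_id.map_fun (LinearMap.toContinuousLinearMap (hf.mk' f))

variable {Ω : Type*} {mΩ : MeasurableSpace Ω} {P : Measure Ω} {X Y : Ω → ℝ}

lemma covariance_eq_zero_of_variance_eq_zero [IsFiniteMeasure P] (hY : MemLp Y 2 P)
    (h : Var[Y; P] = 0) : cov[X, Y; P] = 0 := by
  refine integral_eq_zero_of_ae ?_
  filter_upwards [ae_eq_integral_of_variance_eq_zero hY h] with ω hω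
  simp [hω]

lemma HasGaussianLaw.measure_preimage_ne_zero (hY : HasGaussianLaw Y P) (hvar : 0 < Var[Y; P])
    {B : Set ℝ} (hB : MeasurableSet B) (hB0 : volume B ≠ 0) : P (Y ⁻¹' B) ≠ 0 := by
  rw [← Measure.map_apply₀ hY.aemeasurable hB.nullMeasurableSet, hY.map_eq_gaussianReal]
  exact fun h ↦ hB0 (gaussianReal_absolutelyContinuous' _ (Real.toNNReal_pos.mpr hvar).ne' h)

lemma IndepFun.setIntegral_preimage_eq_mul {R : Ω → ℝ} (hindep : IndepFun Y R P)
    (hY : AEMeasurable Y P) (hR : AEStronglyMeasurable R P) {B : Set ℝ} (hB : MeasurableSet B) :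
    ∫ ω in Y ⁻¹' B, R ω ∂P = P.real (Y ⁻¹' B) * P[R] := by
  have hpre : NullMeasurableSet (Y ⁻¹' B) P := hY.nullMeasurableSet_preimage hB
  have hmeas : ∫ ω, B.indicator 1 (Y ω) ∂P = P.real (Y ⁻¹' B) := calc
    ∫ ω, B.indicator 1 (Y ω) ∂P = ∫ ω, (Y ⁻¹' B).indicator (fun _ ↦ (1 : ℝ)) ω ∂P := by
      congr with ω
    _ = P.real (Y ⁻¹' B) := by
      rw [integral_indicator₀ hpre, setIntegral_const, smul_eq_mul, mul_one]
  calc ∫ ω in Y ⁻¹' B, R ω ∂P = ∫ ω, B.indicator 1 (Y ω) * id (R ω) ∂P := by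
        rw [← integral_indicator₀ hpre]
        congr with ω
        by_cases h : Y ω ∈ B <;> simp [h]
    _ = P.real (Y ⁻¹' B) * P[R] := by
        rw [hindep.integral_fun_comp_mul_comp hY hR.aemeasurable
          (measurable_one.indicator hB).aestronglyMeasurable aestronglyMeasurable_id, hmeas]
        rfl

lemma HasGaussianLaw.setIntegral_preimage_eq (hXY : HasGaussianLaw (fun ω ↦ (X ω, Y ω)) P)
    {k : ℝ} (hk : cov[X, Y; P] = k * Var[Y; P]) {B : Set ℝ} (hB : MeasurableSet B) :
    ∫ ω in Y ⁻¹' B, X ω ∂P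
      = (P[X] - k * P[Y]) * P.real (Y ⁻¹' B) + k * ∫ ω in Y ⁻¹' B, Y ω ∂P := by
  have := hXY.isProbabilityMeasure
  have hX2 := hXY.fst.memLp_two
  have hY2 := hXY.snd.memLp_two
  have hXi := hX2.integrable one_le_two
  have hYi := hY2.integrable one_le_two
  set R : Ω → ℝ := fun ω ↦ X ω - k * Y ω
  have hRi : Integrable R P := hXi.sub (hYi.const_mul k)
  have hRY : HasGaussianLaw (fun ω ↦ (R ω, Y ω)) P :=
    hXY.map_fun (((ContinuousLinearMap.fst ℝ ℝ ℝ) - k • ContinuousLinearMap.snd ℝ ℝ ℝ).prod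
      (ContinuousLinearMap.snd ℝ ℝ ℝ))
  have hcov : cov[R, Y; P] = 0 := by
    rw [covariance_fun_sub_left hX2 (hY2.const_mul k) hY2, covariance_const_mul_left,
      covariance_self hY2.aemeasurable, hk, sub_self]
  have hindep : IndepFun Y R P := (hRY.indepFun_of_covariance_eq_zero hcov).symm
  have hR : ∫ ω in Y ⁻¹' B, R ω ∂P = P.real (Y ⁻¹' B) * P[R] :=
    hindep.setIntegral_preimage_eq_mul hY2.aemeasurable hRY.fst.aemeasurable.aestronglyMeasurable hB
  have hRmean : P[R] = P[X] - k * P[Y] := by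
    rw [integral_sub hXi (hYi.const_mul k), integral_const_mul]
  calc ∫ ω in Y ⁻¹' B, X ω ∂P = ∫ ω in Y ⁻¹' B, (R ω + k * Y ω) ∂P := by
        simp only [R, sub_add_cancel]
    _ = (P[X] - k * P[Y]) * P.real (Y ⁻¹' B) + k * ∫ ω in Y ⁻¹' B, Y ω ∂P := by
        rw [integral_add hRi.integrableOn (hYi.const_mul k).integrableOn, integral_const_mul, hR,
          hRmean, mul_comm]

theorem HasGaussianLaw.mean_mixture_lt_mean_upper
    (hXY : HasGaussianLaw (fun ω ↦ (X ω, Y ω)) P) (hcov : 0 < cov[X, Y; P])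
    {τ₁ τ₂ r : ℝ} (hτ : τ₂ < τ₁) (hr : 0 ≤ r) :
    (∫ ω in {ω | τ₂ ≤ Y ω ∧ Y ω < τ₁}, X ω ∂P + r * ∫ ω in {ω | τ₁ ≤ Y ω}, X ω ∂P)
        / (P.real {ω | τ₂ ≤ Y ω ∧ Y ω < τ₁} + r * P.real {ω | τ₁ ≤ Y ω})
      < (∫ ω in {ω | τ₁ ≤ Y ω}, X ω ∂P) / P.real {ω | τ₁ ≤ Y ω} := by
  have := hXY.isProbabilityMeasure
  have hY := hXY.snd
  have hYi := hY.integrable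
  set S := Y ⁻¹' Ici τ₁
  set M := Y ⁻¹' Ico τ₂ τ₁
  show (∫ ω in M, X ω ∂P + r * ∫ ω in S, X ω ∂P) / (P.real M + r * P.real S)
    < (∫ ω in S, X ω ∂P) / P.real S
  have hvar : 0 < Var[Y; P] := (variance_nonneg _ _).lt_of_ne' fun h ↦
    hcov.ne' (covariance_eq_zero_of_variance_eq_zero hY.memLp_two h)
  set k := cov[X, Y; P] / Var[Y; P]
  have hk : cov[X, Y; P] = k * Var[Y; P] := (div_mul_cancel₀ _ hvar.ne').symm
  have hkpos : 0 < k := div_pos hcov hvar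
  have hXS : ∫ ω in S, X ω ∂P = _ := hXY.setIntegral_preimage_eq hk measurableSet_Ici
  have hXM : ∫ ω in M, X ω ∂P = _ := hXY.setIntegral_preimage_eq hk measurableSet_Ico
  have hmS : 0 < P.real S := ENNReal.toReal_pos
    (hY.measure_preimage_ne_zero hvar measurableSet_Ici (by simp)) (measure_ne_top _ _)
  have hmM : 0 < P.real M := ENNReal.toReal_pos
    (hY.measure_preimage_ne_zero hvar measurableSet_Ico (by simp [hτ])) (measure_ne_top _ _)
  have hYS : τ₁ * P.real S ≤ ∫ ω in S, Y ω ∂P := by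
    rw [mul_comm, ← smul_eq_mul, ← setIntegral_const]
    refine setIntegral_mono_ae_restrict (integrableOn_const (measure_ne_top _ _))
      hYi.integrableOn ?_
    filter_upwards [ae_restrict_mem₀ (hY.aemeasurable.nullMeasurableSet_preimage
      measurableSet_Ici)] with ω hω using hω
  have hYM : ∫ ω in M, Y ω ∂P < τ₁ * P.real M :=
    setIntegral_lt_of_lt_const (hY.aemeasurable.nullMeasurableSet_preimage measurableSet_Ico)
      hmM.ne' hYi.integrableOn fun ω hω ↦ hω.2
  rw [div_lt_div_iff₀ (by positivity) hmS, hXS, hXM]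
  -- the gap is `k (P.real M (∫_S Y - τ₁ P.real S) + P.real S (τ₁ P.real M - ∫_M Y))`
  linear_combination mul_pos (mul_pos hkpos hmS) (sub_pos.2 hYM)
    + mul_nonneg (mul_pos hkpos hmM).le (sub_nonneg.2 hYS)

end ProbabilityTheory

instance inst_s14 : IsGaussian mu3 := by unfold mu3; infer_instance

lemma hasGaussianLaw_linear_mu3 (a b c a' b' c' : ℝ) :
    HasGaussianLaw (fun p : ℝ × ℝ × ℝ ↦
      (a * p.1 + b * p.2.1 + c * p.2.2, a' * p.1 + b' * p.2.1 + c' * p.2.2)) mu3 :=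
  IsGaussian.hasGaussianLaw_of_isLinearMap
    ⟨fun x y ↦ by ext <;> (simp only [Prod.fst_add, Prod.snd_add]; ring),
      fun r x ↦ by ext <;> (simp only [Prod.smul_fst, Prod.smul_snd, smul_eq_mul]; ring)⟩

lemma covariance_linear_mu3 (a b c a' b' c' : ℝ) :
    cov[fun p : ℝ × ℝ × ℝ ↦ a * p.1 + b * p.2.1 + c * p.2.2,
      fun p ↦ a' * p.1 + b' * p.2.1 + c' * p.2.2; mu3] = a * a' + b * b' + c * c' := by
  have hm (a : ℝ) : MemLp (fun x ↦ a * x) 2 (gaussianReal 0 1) :=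
    (memLp_id_gaussianReal 2).const_mul a
  simp only [add_assoc]
  rw [mu3, covariance_add_prod (Y := fun q : ℝ × ℝ ↦ b * q.1 + c * q.2)
    (Y' := fun q : ℝ × ℝ ↦ b' * q.1 + c' * q.2) (hm a) (hm a')
    (((hm b).comp_fst _).add ((hm c).comp_snd _)) (((hm b').comp_fst _).add ((hm c').comp_snd _)),
    covariance_add_prod (hm b) (hm b') (hm c) (hm c'), covariance_const_mul_gaussianReal,
    covariance_const_mul_gaussianReal, covariance_const_mul_gaussianReal]
  simp

theorem stmt14_general (α σZ : ℝ) (hα : α ∈ Set.Ioo (0 : ℝ) 1)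
    (A : ℝ × ℝ × ℝ → ℝ)
    (hA : A = fun p => α * p.1 + (1 - α) * p.2.1 + σZ * p.2.2)
    (τ₁ τ₂ q : ℝ) (hτ : τ₂ < τ₁) (hq : q ∈ Set.Ioc (0 : ℝ) 1)
    (Mt Ms D : ℝ)
    (hD : D = (mu3 {p : ℝ × ℝ × ℝ | τ₂ ≤ A p ∧ A p < τ₁}).toReal
        + (1 - q) * (mu3 {p : ℝ × ℝ × ℝ | τ₁ ≤ A p}).toReal)
    (hMt : Mt = ((∫ p in {p : ℝ × ℝ × ℝ | τ₂ ≤ A p ∧ A p < τ₁}, p.1 ∂mu3)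
        + (1 - q) * ∫ p in {p : ℝ × ℝ × ℝ | τ₁ ≤ A p}, p.1 ∂mu3) / D)
    (hMs : Ms = ((∫ p in {p : ℝ × ℝ × ℝ | τ₂ ≤ A p ∧ A p < τ₁}, p.2.1 ∂mu3)
        + (1 - q) * ∫ p in {p : ℝ × ℝ × ℝ | τ₁ ≤ A p}, p.2.1 ∂mu3) / D) :
    (∫ p in {p : ℝ × ℝ × ℝ | τ₁ ≤ A p}, p.1 ∂mu3) /
        (mu3 {p : ℝ × ℝ × ℝ | τ₁ ≤ A p}).toReal > Mt ∧
    (∫ p in {p : ℝ × ℝ × ℝ | τ₁ ≤ A p}, p.2.1 ∂mu3) /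
        (mu3 {p : ℝ × ℝ × ℝ | τ₁ ≤ A p}).toReal > Ms := by
  subst hA hD hMt hMs
  have hr : 0 ≤ 1 - q := sub_nonneg.2 hq.2
  have hlaw_t := hasGaussianLaw_linear_mu3 1 0 0 α (1 - α) σZ
  have hlaw_s := hasGaussianLaw_linear_mu3 0 1 0 α (1 - α) σZ
  have hcov_t := covariance_linear_mu3 1 0 0 α (1 - α) σZ
  have hcov_s := covariance_linear_mu3 0 1 0 α (1 - α) σZ
  simp only [one_mul, zero_mul, zero_add, add_zero] at hlaw_t hlaw_s hcov_t hcov_s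
  exact ⟨hlaw_t.mean_mixture_lt_mean_upper (hcov_t.symm ▸ hα.1) hτ hr,
    hlaw_s.mean_mixture_lt_mean_upper (hcov_s.symm ▸ sub_pos.2 hα.2) hτ hr⟩

theorem stmt14 (α σZ : ℝ) (hα : α ∈ Set.Ioo (0 : ℝ) 1) (hσZ : 0 ≤ σZ)
    (A : ℝ × ℝ × ℝ → ℝ)
    (hA : A = fun p => α * p.1 + (1 - α) * p.2.1 + σZ * p.2.2)
    (τ₁ τ₂ q : ℝ) (hτ : τ₂ < τ₁) (hq : q ∈ Set.Ioc (0 : ℝ) 1)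
    (Mt Ms D : ℝ)
    (hD : D = (mu3 {p : ℝ × ℝ × ℝ | τ₂ ≤ A p ∧ A p < τ₁}).toReal
        + (1 - q) * (mu3 {p : ℝ × ℝ × ℝ | τ₁ ≤ A p}).toReal)
    (hMt : Mt = ((∫ p in {p : ℝ × ℝ × ℝ | τ₂ ≤ A p ∧ A p < τ₁}, p.1 ∂mu3)
        + (1 - q) * ∫ p in {p : ℝ × ℝ × ℝ | τ₁ ≤ A p}, p.1 ∂mu3) / D)
    (hMs : Ms = ((∫ p in {p : ℝ × ℝ × ℝ | τ₂ ≤ A p ∧ A p < τ₁}, p.2.1 ∂mu3)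
        + (1 - q) * ∫ p in {p : ℝ × ℝ × ℝ | τ₁ ≤ A p}, p.2.1 ∂mu3) / D) :
    (∫ p in {p : ℝ × ℝ × ℝ | τ₁ ≤ A p}, p.1 ∂mu3) /
        (mu3 {p : ℝ × ℝ × ℝ | τ₁ ≤ A p}).toReal > Mt ∧
    (∫ p in {p : ℝ × ℝ × ℝ | τ₁ ≤ A p}, p.2.1 ∂mu3) /
        (mu3 {p : ℝ × ℝ × ℝ | τ₁ ≤ A p}).toReal > Ms :=
  stmt14_general α σZ hα A hA τ₁ τ₂ q hτ hq Mt Ms D hD hMt hMs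
end

section
/- Let 0 ≤ a < b and 0 < σ₁ ≤ σ₂, and let ν_i denote the centered Gaussian measure N(0, σ_i²) on ℝ for i = 1,2. Then (∫_{[a,b]} y dν₂)/ν₂([a,b]) ≥ (∫_{[a,b]} y dν₁)/ν₁([a,b]); that is, the mean of a centered normal variable conditioned to lie in [a,b] is monotone nondecreasing in its standard deviation. -/
open MeasureTheory ProbabilityTheory Real Set
open scoped ENNReal NNReal

/-- Weighted Chebyshev / FKG correlation inequality. -/
lemma cheb_aux {μ : Measure ℝ} {f g w : ℝ → ℝ} (hw : ∀ x, 0 ≤ w x)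
    (hw_int : Integrable w μ) (hfw : Integrable (fun x => f x * w x) μ)
    (hgw : Integrable (fun x => g x * w x) μ)
    (hfgw : Integrable (fun x => f x * g x * w x) μ)
    (hmono : ∀ᵐ y ∂μ, ∀ᵐ x ∂μ, 0 ≤ (f x - f y) * (g x - g y)) :
    (∫ x, f x * w x ∂μ) * (∫ x, g x * w x ∂μ) ≤
      (∫ x, w x ∂μ) * ∫ x, f x * g x * w x ∂μ := by
  set Iw := ∫ x, w x ∂μ with hIw
  set If := ∫ x, f x * w x ∂μ with hIf
  set Ig := ∫ x, g x * w x ∂μ with hIg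
  set Ifg := ∫ x, f x * g x * w x ∂μ with hIfg
  have key : ∀ y, ∫ x, ((f x - f y) * (g x - g y)) * (w x * w y) ∂μ
      = (Ifg - f y * Ig - g y * If + (f y * g y) * Iw) * w y := by
    intro y
    have h1 : (fun x => ((f x - f y) * (g x - g y)) * (w x * w y))
        = fun x => (f x * g x * w x - f y * (g x * w x) - g y * (f x * w x)
            + (f y * g y) * w x) * w y := by
      ext x; ring
    rw [h1, integral_mul_const]
    have i1 : Integrable (fun x => f y * (g x * w x)) μ := hgw.const_mul _
    have i2 : Integrable (fun x => g y * (f x * w x)) μ := hfw.const_mul _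
    have i3 : Integrable (fun x => (f y * g y) * w x) μ := hw_int.const_mul _
    have i4 : Integrable (fun x => f x * g x * w x - f y * (g x * w x)) μ := hfgw.sub i1
    have i5 : Integrable
        (fun x => (f x * g x * w x - f y * (g x * w x)) - g y * (f x * w x)) μ := i4.sub i2
    rw [integral_add i5 i3, integral_sub i4 i2, integral_sub hfgw i1, integral_const_mul,
      integral_const_mul, integral_const_mul]
  have pos : 0 ≤ ∫ y, (Ifg - f y * Ig - g y * If + (f y * g y) * Iw) * w y ∂μ := by
    refine integral_nonneg_of_ae ?_
    filter_upwards [hmono] with y hy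
    rw [← key y]
    refine integral_nonneg_of_ae ?_
    filter_upwards [hy] with x hx
    exact mul_nonneg hx (mul_nonneg (hw x) (hw y))
  have expand : (fun y => (Ifg - f y * Ig - g y * If + (f y * g y) * Iw) * w y)
      = fun y => Ifg * w y - Ig * (f y * w y) - If * (g y * w y) + Iw * (f y * g y * w y) := by
    ext y; ring
  have j1 : Integrable (fun y => Ifg * w y) μ := hw_int.const_mul _
  have j2 : Integrable (fun y => Ig * (f y * w y)) μ := hfw.const_mul _
  have j3 : Integrable (fun y => If * (g y * w y)) μ := hgw.const_mul _
  have j4 : Integrable (fun y => Iw * (f y * g y * w y)) μ := hfgw.const_mul _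
  have j5 : Integrable (fun y => Ifg * w y - Ig * (f y * w y)) μ := j1.sub j2
  have j6 : Integrable (fun y => (Ifg * w y - Ig * (f y * w y)) - If * (g y * w y)) μ := j5.sub j3
  rw [expand, integral_add j6 j4, integral_sub j5 j3, integral_sub j1 j2, integral_const_mul,
    integral_const_mul, integral_const_mul, integral_const_mul] at pos
  linarith

lemma gauss_setIntegral {v : ℝ≥0} (hv : v ≠ 0) {s : Set ℝ} (hs : MeasurableSet s) (h : ℝ → ℝ) :
    ∫ x in s, h x ∂(gaussianReal 0 v) = ∫ x in s, h x * gaussianPDFReal 0 v x := by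
  rw [gaussianReal_of_var_ne_zero _ hv, restrict_withDensity hs]
  have h0 : gaussianPDF 0 v = fun x => ((gaussianPDFReal 0 v x).toNNReal : ℝ≥0∞) := rfl
  rw [h0, integral_withDensity_eq_integral_smul (measurable_gaussianPDFReal 0 v).real_toNNReal]
  congr 1
  ext x
  rw [NNReal.smul_def, smul_eq_mul, Real.coe_toNNReal _ (gaussianPDFReal_nonneg 0 v x), mul_comm]

theorem stmt16 (a b σ₁ σ₂ : ℝ) (ha : 0 ≤ a) (hab : a < b) (h1 : 0 < σ₁) (h12 : σ₁ ≤ σ₂)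
    (ν₁ ν₂ : Measure ℝ)
    (hν₁ : ν₁ = gaussianReal 0 (σ₁ ^ 2).toNNReal)
    (hν₂ : ν₂ = gaussianReal 0 (σ₂ ^ 2).toNNReal) :
    (∫ y in Set.Icc a b, y ∂ν₁) / (ν₁ (Set.Icc a b)).toReal ≤
      (∫ y in Set.Icc a b, y ∂ν₂) / (ν₂ (Set.Icc a b)).toReal := by
  have h2 : 0 < σ₂ := h1.trans_le h12
  have hv₁ : (σ₁ ^ 2).toNNReal ≠ 0 := fun h =>
    absurd (Real.toNNReal_eq_zero.mp h) (not_le.mpr (by positivity))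
  have hv₂ : (σ₂ ^ 2).toNNReal ≠ 0 := fun h =>
    absurd (Real.toNNReal_eq_zero.mp h) (not_le.mpr (by positivity))
  have hs : MeasurableSet (Icc a b) := measurableSet_Icc
  set k : ℝ := 1 / (2 * σ₁ ^ 2) - 1 / (2 * σ₂ ^ 2) with hk_def
  have hk : 0 ≤ k := by
    rw [hk_def, sub_nonneg]
    apply one_div_le_one_div_of_le (by positivity)
    nlinarith
  set g : ℝ → ℝ := fun y => rexp (k * y ^ 2) with hg_def
  set p : ℝ → ℝ := gaussianPDFReal 0 (σ₁ ^ 2).toNNReal with hp_def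
  set r : ℝ := Real.sqrt (2 * π * σ₁ ^ 2) / Real.sqrt (2 * π * σ₂ ^ 2) with hr_def
  have hr : 0 < r := div_pos (sqrt_pos.mpr (by positivity)) (sqrt_pos.mpr (by positivity))
  have hrel : ∀ y, gaussianPDFReal 0 (σ₂ ^ 2).toNNReal y = r * (g y * p y) := by
    intro y
    rw [hp_def, hg_def, hr_def]
    simp only [gaussianPDFReal, sub_zero]
    rw [Real.coe_toNNReal _ (sq_nonneg σ₁), Real.coe_toNNReal _ (sq_nonneg σ₂)]
    have hexp : k * y ^ 2 + -y ^ 2 / (2 * σ₁ ^ 2) = -y ^ 2 / (2 * σ₂ ^ 2) := by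
      rw [hk_def]; field_simp; ring
    rw [← hexp, Real.exp_add]
    have hs1 : Real.sqrt (2 * π * σ₁ ^ 2) ≠ 0 := (sqrt_pos.mpr (by positivity)).ne'
    field_simp
  -- continuity and integrability
  have hpc : Continuous p := by
    rw [hp_def, gaussianPDFReal_def]; fun_prop
  have hgc : Continuous g := by rw [hg_def]; fun_prop
  have hp0 : ∀ x, 0 ≤ p x := fun x => gaussianPDFReal_nonneg _ _ x
  have hw_int : Integrable p (volume.restrict (Icc a b)) := hpc.integrableOn_Icc
  have hfw : Integrable (fun x => x * p x) (volume.restrict (Icc a b)) :=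
    (continuous_id.mul hpc).integrableOn_Icc
  have hgw : Integrable (fun x => g x * p x) (volume.restrict (Icc a b)) :=
    (hgc.mul hpc).integrableOn_Icc
  have hfgw : Integrable (fun x => x * g x * p x) (volume.restrict (Icc a b)) :=
    ((continuous_id.mul hgc).mul hpc).integrableOn_Icc
  -- positivity of denominators
  have hpos : ∀ F : ℝ → ℝ, Continuous F → (∀ x, 0 < F x) → 0 < ∫ y in Icc a b, F y := by
    intro F hFc hF
    rw [integral_Icc_eq_integral_Ioc, ← intervalIntegral.integral_of_le hab.le]
    exact intervalIntegral.intervalIntegral_pos_of_pos (hFc.intervalIntegrable a b) hF hab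
  have hI₁ : 0 < ∫ y in Icc a b, p y :=
    hpos p hpc fun x => gaussianPDFReal_pos _ _ x hv₁
  have hIg : 0 < ∫ y in Icc a b, g y * p y :=
    hpos _ (hgc.mul hpc) fun x => mul_pos (exp_pos _) (gaussianPDFReal_pos _ _ x hv₁)
  -- monotone pairing
  have hmono : ∀ᵐ y ∂(volume.restrict (Icc a b)), ∀ᵐ x ∂(volume.restrict (Icc a b)),
      0 ≤ ((fun t : ℝ => t) x - (fun t : ℝ => t) y) * (g x - g y) := by
    filter_upwards [ae_restrict_mem hs] with y hy
    filter_upwards [ae_restrict_mem hs] with x hx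
    show 0 ≤ (x - y) * (g x - g y)
    rcases le_total x y with h | h
    · have hgxy : g x ≤ g y := by
        rw [hg_def]
        exact exp_le_exp.mpr (mul_le_mul_of_nonneg_left (by nlinarith [hx.1, hy.1] : x ^ 2 ≤ y ^ 2) hk)
      nlinarith
    · have hgxy : g y ≤ g x := by
        rw [hg_def]
        exact exp_le_exp.mpr (mul_le_mul_of_nonneg_left (by nlinarith [hx.1, hy.1] : y ^ 2 ≤ x ^ 2) hk)
      nlinarith
  have cheb := cheb_aux (f := fun t : ℝ => t) (g := g) (w := p)
    (μ := volume.restrict (Icc a b)) hp0 hw_int hfw hgw hfgw hmono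
  -- rewrite goal quantities
  have hE₁ : ∫ y in Icc a b, y ∂ν₁ = ∫ y in Icc a b, y * p y := by
    rw [hν₁]; exact gauss_setIntegral hv₁ hs _
  have hM₁ : (ν₁ (Icc a b)).toReal = ∫ y in Icc a b, p y := by
    rw [hν₁, gaussianReal_apply_eq_integral _ hv₁,
      ENNReal.toReal_ofReal (integral_nonneg fun x => gaussianPDFReal_nonneg _ _ x)]
  have hE₂ : ∫ y in Icc a b, y ∂ν₂ = r * ∫ y in Icc a b, y * g y * p y := by
    rw [hν₂, gauss_setIntegral hv₂ hs]
    rw [← integral_const_mul]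
    refine integral_congr_ae (ae_of_all _ fun y => ?_)
    show y * gaussianPDFReal 0 (σ₂ ^ 2).toNNReal y = r * (y * g y * p y)
    rw [hrel y]; ring
  have hM₂ : (ν₂ (Icc a b)).toReal = r * ∫ y in Icc a b, g y * p y := by
    rw [hν₂, gaussianReal_apply_eq_integral _ hv₂,
      ENNReal.toReal_ofReal (integral_nonneg fun x => gaussianPDFReal_nonneg _ _ x),
      ← integral_const_mul]
    refine integral_congr_ae (ae_of_all _ fun y => ?_)
    show gaussianPDFReal 0 (σ₂ ^ 2).toNNReal y = r * (g y * p y)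
    rw [hrel y]
  rw [hE₁, hM₁, hE₂, hM₂, mul_div_mul_left _ _ hr.ne', div_le_div_iff₀ hI₁ hIg]
  nlinarith [cheb]
end
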